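/- Let n ≥ 2, 1 < p̃₁, p̃₂ < ∞, n + α₂ > 0, and 0 < β < n. Then the fractional Hardy operator H_β maps L¹_{rad}L^{p̃₁}_{ang}(ℝⁿ) to the weak mixed space 𝓦L^{(n+α₂)/(n−β)}_{rad}L^{p̃₂}_{ang}(ℝⁿ, |x|^{α₂}) with operator norm exactly ω_n^{1/p̃₁' + 1/p̃₂} ν_n^{β/n − 1} (1/(n+α₂))^{(n−β)/(n+α₂)}. -/

import Mathlib

open MeasureTheory Set ENNReal Metric

/-- The surface measure on the unit sphere `S^{n-1}` in `ℝⁿ`. -/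
noncomputable def sphereMeasure (n : ℕ) :
    Measure (sphere (0 : EuclideanSpace ℝ (Fin n)) 1) :=
  (volume : Measure (EuclideanSpace ℝ (Fin n))).toSphere

/-- The weighted mixed radial-angular norm
`‖f‖_{L^p_{rad}L^{pt}_{ang}(ℝⁿ, r^α)} = (∫₀^∞ ‖f(r·)‖_{L^{pt}(S^{n-1})}^p r^{n-1+α} dr)^{1/p}`. -/
noncomputable def mixedNormW (n : ℕ) (p pt α : ℝ)
    (f : EuclideanSpace ℝ (Fin n) → ℝ) : ℝ≥0∞ :=
  (∫⁻ r in Ioi (0 : ℝ),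
    (∫⁻ θ : sphere (0 : EuclideanSpace ℝ (Fin n)) 1,
        ENNReal.ofReal |f (r • (θ : EuclideanSpace ℝ (Fin n)))| ^ pt
      ∂(sphereMeasure n)) ^ (p / pt) *
      ENNReal.ofReal (r ^ ((n : ℝ) - 1 + α))) ^ (1 / p)

/-- The weak weighted mixed radial-angular quasinorm
`sup_{λ>0} λ ‖𝟙_{|g|>λ}‖_{L^p_{rad}L^{pt}_{ang}(ℝⁿ, r^α)}`. -/
noncomputable def weakMixedNormW (n : ℕ) (p pt α : ℝ)
    (g : EuclideanSpace ℝ (Fin n) → ℝ) : ℝ≥0∞ :=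
  ⨆ (lam : ℝ) (_ : 0 < lam),
    ENNReal.ofReal lam * mixedNormW n p pt α (fun x => if lam < |g x| then 1 else 0)

/-- The fractional Hardy operator `H_β f(x) = |B(0,|x|)|^{β/n - 1} ∫_{|y|≤|x|} f(y) dy`. -/
noncomputable def fracHardy (n : ℕ) (β : ℝ) (f : EuclideanSpace ℝ (Fin n) → ℝ)
    (x : EuclideanSpace ℝ (Fin n)) : ℝ :=
  (volume (ball (0 : EuclideanSpace ℝ (Fin n)) ‖x‖)).toReal ^ (β / n - 1) *
    ∫ y in closedBall (0 : EuclideanSpace ℝ (Fin n)) ‖x‖, f y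

/-- The volume `ν_n` of the unit ball in `ℝⁿ`. -/
noncomputable def nu (n : ℕ) : ℝ :=
  (volume (ball (0 : EuclideanSpace ℝ (Fin n)) 1)).toReal

/-!
Hölder's inequality on each sphere bounds `∫_{|y| ≤ |x|} |f|` by `ω_n^{1/p̃₁'} ‖f‖`, so
`|H_β f(x)| ≤ ω_n^{1/p̃₁'} ν_n^{β/n-1} ‖f‖ |x|^{β-n}`. The superlevel sets of `|x|^{β-n}` are
balls centred at the origin, whose mixed norms are computed in polar coordinates; this gives the
upper bound. For sharpness take `f = 𝟙_{B(0,1)}`: outside the unit ball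
`H_β f = ν_n^{β/n} |x|^{β-n}`, so at height `ν_n^{β/n} b^{β-n}` the superlevel set contains the
annulus `1 < |x| < b`, and the resulting lower bound tends to the constant as `b → ∞`.
-/

section Polar

variable {E : Type*} [NormedAddCommGroup E] [NormedSpace ℝ E] [FiniteDimensional ℝ E]
  [MeasurableSpace E] [BorelSpace E] [Nontrivial E] (μ : Measure E) [μ.IsAddHaarMeasure]

theorem lintegral_eq_lintegral_Ioi_lintegral_toSphere {g : E → ℝ≥0∞} (hg : Measurable g) :
    ∫⁻ x, g x ∂μ = ∫⁻ r in Ioi (0 : ℝ),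
      (∫⁻ θ : sphere (0 : E) 1, g (r • (θ : E)) ∂μ.toSphere) *
        ENNReal.ofReal (r ^ (Module.finrank ℝ E - 1)) := by
  have hF : Measurable fun p : sphere (0 : E) 1 × Ioi (0 : ℝ) => g ((p.2 : ℝ) • (p.1 : E)) := by
    fun_prop
  calc ∫⁻ x, g x ∂μ = ∫⁻ x : ({0}ᶜ : Set E), g x ∂(μ.comap (↑)) := by
        rw [lintegral_subtype_comap (measurableSet_singleton 0).compl, restrict_compl_singleton]
    _ = ∫⁻ p : sphere (0 : E) 1 × Ioi (0 : ℝ), g ((p.2 : ℝ) • (p.1 : E))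
          ∂(μ.toSphere.prod (Measure.volumeIoiPow (Module.finrank ℝ E - 1))) := by
        rw [← μ.measurePreserving_homeomorphUnitSphereProd.lintegral_comp hF]
        refine lintegral_congr fun x => ?_
        simp [smul_inv_smul₀ (norm_ne_zero_iff.2 x.2)]
    _ = ∫⁻ r : Ioi (0 : ℝ), ∫⁻ θ, g ((r : ℝ) • (θ : E)) ∂μ.toSphere
          ∂(Measure.volumeIoiPow (Module.finrank ℝ E - 1)) :=
        lintegral_prod_symm _ hF.aemeasurable
    _ = _ := by
        rw [Measure.volumeIoiPow, lintegral_withDensity_eq_lintegral_mul _ (by fun_prop)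
          hF.lintegral_prod_left, ← lintegral_subtype_comap measurableSet_Ioi]
        simp only [Pi.mul_apply, mul_comm]

end Polar

theorem lintegral_le_lintegral_rpow_rpow_mul_measure_univ {α : Type*} [MeasurableSpace α]
    (μ : Measure α) {p : ℝ} (hp : 1 < p) {φ : α → ℝ≥0∞} (hφ : AEMeasurable φ μ) :
    ∫⁻ a, φ a ∂μ ≤ (∫⁻ a, φ a ^ p ∂μ) ^ (1 / p) * μ univ ^ (1 - 1 / p) := by
  have hpq : p.HolderConjugate (p / (p - 1)) := .conjExponent hp
  have H := ENNReal.lintegral_mul_le_Lp_mul_Lq μ hpq hφ aemeasurable_const (g := 1)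
  rw [show 1 / (p / (p - 1)) = 1 - 1 / p by field_simp] at H
  simpa using H

section MixedNorm

variable {n : ℕ}

instance (n : ℕ) : IsFiniteMeasure (sphereMeasure n) := by
  unfold sphereMeasure; infer_instance

lemma nu_pos (n : ℕ) : 0 < nu n :=
  ENNReal.toReal_pos (measure_ball_pos _ _ one_pos).ne' measure_ball_lt_top.ne

lemma sphereMeasure_univ (n : ℕ) : sphereMeasure n univ = ENNReal.ofReal (n * nu n) := by
  rw [sphereMeasure, Measure.toSphere_apply_univ, finrank_euclideanSpace_fin,
    ENNReal.ofReal_mul (Nat.cast_nonneg n), ENNReal.ofReal_natCast, nu,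
    ENNReal.ofReal_toReal measure_ball_lt_top.ne]

lemma norm_smul_sphere {r : ℝ} (hr : 0 ≤ r) (θ : sphere (0 : EuclideanSpace ℝ (Fin n)) 1) :
    ‖r • (θ : EuclideanSpace ℝ (Fin n))‖ = r := by
  rw [norm_smul, norm_eq_of_mem_sphere θ, mul_one, Real.norm_of_nonneg hr]

lemma volume_ball_toReal_rpow (hn : n ≠ 0) {r : ℝ} (hr : 0 < r) (β : ℝ) :
    (volume (ball (0 : EuclideanSpace ℝ (Fin n)) r)).toReal ^ (β / n - 1) =
      nu n ^ (β / n - 1) * r ^ (β - n) := by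
  have : Nonempty (Fin n) := ⟨⟨0, Nat.pos_of_ne_zero hn⟩⟩
  rw [Measure.addHaar_ball_of_pos _ _ hr, finrank_euclideanSpace_fin, ENNReal.toReal_mul,
    ENNReal.toReal_ofReal (by positivity), ← nu, Real.mul_rpow (by positivity) (nu_pos n).le,
    ← Real.rpow_natCast, ← Real.rpow_mul hr.le, mul_comm]
  congr 2
  field_simp

lemma lintegral_ofReal_abs_le_mixedNormW (hn : n ≠ 0) {pt : ℝ} (hpt : 1 < pt)
    {f : EuclideanSpace ℝ (Fin n) → ℝ} (hf : Measurable f) :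
    ∫⁻ x, ENNReal.ofReal |f x| ≤
      ENNReal.ofReal ((n * nu n) ^ (1 - 1 / pt)) * mixedNormW n 1 pt 0 f := by
  have : Nonempty (Fin n) := ⟨⟨0, Nat.pos_of_ne_zero hn⟩⟩
  have hexp : (0 : ℝ) ≤ 1 - 1 / pt := by
    rw [sub_nonneg, div_le_one (by linarith)]; exact hpt.le
  rw [lintegral_eq_lintegral_Ioi_lintegral_toSphere volume hf.abs.ennreal_ofReal,
    finrank_euclideanSpace_fin, mixedNormW, div_one, ENNReal.rpow_one,
    ← ENNReal.ofReal_rpow_of_pos (by positivity [nu_pos n]), ← sphereMeasure_univ,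
    ← lintegral_const_mul' _ _ (ENNReal.rpow_ne_top_of_nonneg hexp (measure_ne_top _ _))]
  refine setLIntegral_mono' measurableSet_Ioi fun r hr => ?_
  have hweight : r ^ (n - 1) = r ^ ((n : ℝ) - 1 + 0) := by
    rw [add_zero, ← Real.rpow_natCast, Nat.cast_sub (Nat.one_le_iff_ne_zero.2 hn), Nat.cast_one]
  rw [hweight, ← mul_assoc, mul_comm (sphereMeasure n univ ^ _)]
  gcongr
  exact lintegral_le_lintegral_rpow_rpow_mul_measure_univ _ hpt (by fun_prop)

lemma abs_setIntegral_le_mixedNormW (hn : n ≠ 0) {pt : ℝ} (hpt : 1 < pt)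
    {f : EuclideanSpace ℝ (Fin n) → ℝ} (hf : Measurable f) (hfin : mixedNormW n 1 pt 0 f < ⊤)
    (s : Set (EuclideanSpace ℝ (Fin n))) :
    |∫ y in s, f y| ≤ (n * nu n) ^ (1 - 1 / pt) * (mixedNormW n 1 pt 0 f).toReal := by
  have hbound : ∫⁻ y in s, ENNReal.ofReal |f y| ≤
      ENNReal.ofReal ((n * nu n) ^ (1 - 1 / pt)) * mixedNormW n 1 pt 0 f :=
    (setLIntegral_le_lintegral _ _).trans (lintegral_ofReal_abs_le_mixedNormW hn hpt hf)
  calc |∫ y in s, f y| ≤ ∫ y in s, |f y| := abs_integral_le_integral_abs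
    _ = (∫⁻ y in s, ENNReal.ofReal |f y|).toReal :=
        integral_eq_lintegral_of_nonneg_ae (ae_of_all _ fun y => abs_nonneg _)
          hf.abs.aestronglyMeasurable
    _ ≤ (ENNReal.ofReal ((n * nu n) ^ (1 - 1 / pt)) * mixedNormW n 1 pt 0 f).toReal :=
        ENNReal.toReal_mono (ENNReal.mul_ne_top ENNReal.ofReal_ne_top hfin.ne) hbound
    _ = _ := by rw [ENNReal.toReal_mul, ENNReal.toReal_ofReal (by positivity [nu_pos n])]

lemma abs_fracHardy_le (hn : n ≠ 0) {β pt : ℝ} (hpt : 1 < pt)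
    {f : EuclideanSpace ℝ (Fin n) → ℝ} (hf : Measurable f) (hfin : mixedNormW n 1 pt 0 f < ⊤)
    {x : EuclideanSpace ℝ (Fin n)} (hx : x ≠ 0) :
    |fracHardy n β f x| ≤ (n * nu n) ^ (1 - 1 / pt) * nu n ^ (β / n - 1) *
      (mixedNormW n 1 pt 0 f).toReal * ‖x‖ ^ (β - n) := by
  rw [fracHardy, abs_mul, volume_ball_toReal_rpow hn (norm_pos_iff.2 hx),
    abs_of_nonneg (by positivity [nu_pos n])]
  calc nu n ^ (β / n - 1) * ‖x‖ ^ (β - n) * |∫ y in closedBall 0 ‖x‖, f y|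
      ≤ nu n ^ (β / n - 1) * ‖x‖ ^ (β - n) *
        ((n * nu n) ^ (1 - 1 / pt) * (mixedNormW n 1 pt 0 f).toReal) := by
        have := nu_pos n
        gcongr
        exact abs_setIntegral_le_mixedNormW hn hpt hf hfin _
    _ = _ := by ring

end MixedNorm

lemma lintegral_Ioo_rpow {c : ℝ} (hc : -1 < c) {a b : ℝ} (ha : 0 ≤ a) (hab : a ≤ b) :
    ∫⁻ r in Ioo a b, ENNReal.ofReal (r ^ c) =
      ENNReal.ofReal ((b ^ (c + 1) - a ^ (c + 1)) / (c + 1)) := by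
  rw [← ofReal_integral_eq_lintegral_ofReal
    ((intervalIntegral.intervalIntegrable_rpow' hc).1.mono_set Ioo_subset_Ioc_self)
    (ae_restrict_of_forall_mem measurableSet_Ioo fun r hr =>
      Real.rpow_nonneg (ha.trans hr.1.le) c),
    setIntegral_congr_set Ioo_ae_eq_Ioc, ← intervalIntegral.integral_of_le hab,
    integral_rpow (Or.inl hc)]

section RadialIndicator

variable {n : ℕ} {p pt α : ℝ}

lemma mixedNormW_mono (hp : 0 ≤ p) (hpt : 0 ≤ pt) {f g : EuclideanSpace ℝ (Fin n) → ℝ}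
    (h : ∀ r : ℝ, 0 < r → ∀ θ : sphere (0 : EuclideanSpace ℝ (Fin n)) 1,
      |f (r • (θ : EuclideanSpace ℝ (Fin n)))| ≤ |g (r • (θ : EuclideanSpace ℝ (Fin n)))|) :
    mixedNormW n p pt α f ≤ mixedNormW n p pt α g := by
  unfold mixedNormW
  refine ENNReal.rpow_le_rpow (setLIntegral_mono' measurableSet_Ioi fun r hr => ?_) (by positivity)
  gcongr ?_ ^ _ * _
  exact lintegral_mono fun θ => ENNReal.rpow_le_rpow (ENNReal.ofReal_le_ofReal (h r hr θ)) hpt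

lemma mixedNormW_indicator_norm (hp : 0 < p) (hpt : 0 < pt) {S : Set ℝ}
    (hS : MeasurableSet S) :
    mixedNormW n p pt α (fun x => S.indicator 1 ‖x‖) =
      sphereMeasure n univ ^ (1 / pt) *
        (∫⁻ r in S ∩ Ioi 0, ENNReal.ofReal (r ^ ((n : ℝ) - 1 + α))) ^ (1 / p) := by
  unfold mixedNormW
  have hradial : ∀ r ∈ Ioi (0 : ℝ),
      (∫⁻ θ : sphere (0 : EuclideanSpace ℝ (Fin n)) 1,
        ENNReal.ofReal |S.indicator 1 ‖r • (θ : EuclideanSpace ℝ (Fin n))‖| ^ pt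
          ∂sphereMeasure n) ^ (p / pt) * ENNReal.ofReal (r ^ ((n : ℝ) - 1 + α)) =
        S.indicator (fun r => sphereMeasure n univ ^ (p / pt) *
          ENNReal.ofReal (r ^ ((n : ℝ) - 1 + α))) r := by
    intro r hr
    simp_rw [norm_smul_sphere (le_of_lt hr)]
    by_cases hrS : r ∈ S
    · simp [hrS]
    · simp [hrS, ENNReal.zero_rpow_of_pos hpt, ENNReal.zero_rpow_of_pos (div_pos hp hpt)]
  rw [setLIntegral_congr_fun measurableSet_Ioi hradial, lintegral_indicator hS,
    Measure.restrict_restrict hS, lintegral_const_mul' _ _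
      (ENNReal.rpow_ne_top_of_nonneg (by positivity) (measure_ne_top _ _)),
    ENNReal.mul_rpow_of_nonneg _ _ (by positivity), ← ENNReal.rpow_mul]
  congr 2
  field_simp

lemma mixedNormW_indicator_norm_eq (hp : 0 < p) (hpt : 0 < pt) (hα : 0 < n + α) {S : Set ℝ}
    (hS : MeasurableSet S) {a b : ℝ} (ha : 0 ≤ a) (hab : a ≤ b) (hSab : S ∩ Ioi 0 = Ioo a b) :
    mixedNormW n p pt α (fun x => S.indicator 1 ‖x‖) =
      ENNReal.ofReal ((n * nu n) ^ (1 / pt) *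
        ((b ^ (n + α) - a ^ (n + α)) / (n + α)) ^ (1 / p)) := by
  have hquot : 0 ≤ (b ^ (n + α) - a ^ (n + α)) / (n + α) :=
    div_nonneg (sub_nonneg.2 (Real.rpow_le_rpow ha hab hα.le)) hα.le
  rw [mixedNormW_indicator_norm hp hpt hS, hSab, lintegral_Ioo_rpow (by linarith) ha hab,
    show (n : ℝ) - 1 + α + 1 = n + α by ring, sphereMeasure_univ,
    ENNReal.ofReal_rpow_of_nonneg (by positivity [nu_pos n]) (by positivity),
    ENNReal.ofReal_rpow_of_nonneg hquot (by positivity),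
    ← ENNReal.ofReal_mul (by positivity [nu_pos n])]

end RadialIndicator

section WeakNorm

variable {n : ℕ} {pt α : ℝ}

lemma ofReal_mul_mixedNormW_le_weakMixedNormW {p : ℝ} (hp : 0 ≤ p) (hpt : 0 ≤ pt)
    {g : EuclideanSpace ℝ (Fin n) → ℝ} {S : Set ℝ} {lam : ℝ} (hlam : 0 < lam)
    (hS : ∀ x, ‖x‖ ∈ S → lam < |g x|) :
    ENNReal.ofReal lam * mixedNormW n p pt α (fun x => S.indicator 1 ‖x‖) ≤
      weakMixedNormW n p pt α g := by
  refine le_iSup₂_of_le lam hlam (mul_le_mul_right (mixedNormW_mono hp hpt fun r _ θ => ?_) _)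
  by_cases hr : ‖r • (θ : EuclideanSpace ℝ (Fin n))‖ ∈ S
  · simp [hr, hS _ hr]
  · simp [hr]

lemma weakMixedNormW_le_of_abs_le (hpt : 0 < pt) (hα : 0 < n + α) {d A : ℝ} (hd : 0 < d)
    (hA : 0 ≤ A) {g : EuclideanSpace ℝ (Fin n) → ℝ} (hg : ∀ x, x ≠ 0 → |g x| ≤ A * ‖x‖ ^ (-d)) :
    weakMixedNormW n ((n + α) / d) pt α g ≤
      ENNReal.ofReal ((n * nu n) ^ (1 / pt) * (1 / (n + α)) ^ (d / (n + α)) * A) := by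
  refine iSup₂_le fun lam hlam => ?_
  set R := (A / lam) ^ d⁻¹ with hR
  have hR0 : 0 ≤ R := by positivity
  have hsub : ∀ r : ℝ, 0 < r → lam < A * r ^ (-d) → r < R := by
    intro r hr hlt
    rw [Real.rpow_neg hr.le, ← div_eq_mul_inv, lt_div_iff₀ (by positivity), mul_comm,
      ← lt_div_iff₀ hlam] at hlt
    exact (Real.lt_rpow_inv_iff_of_pos hr.le (by positivity) hd).2 hlt
  have hlevel : mixedNormW n ((n + α) / d) pt α
      (fun x => if lam < |g x| then 1 else 0) ≤
      mixedNormW n ((n + α) / d) pt α (fun x => (Iio R).indicator 1 ‖x‖) := by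
    refine mixedNormW_mono (by positivity) hpt.le fun r hr θ => ?_
    split_ifs with hlt
    · have hx := smul_ne_zero hr.ne' (ne_zero_of_mem_unit_sphere θ)
      have hbound := hg _ hx
      rw [norm_smul_sphere hr.le θ] at hbound
      simp [norm_smul_sphere hr.le, hsub r hr (hlt.trans_le hbound)]
    · simp
  have hR_pow : (R ^ ((n : ℝ) + α)) ^ (d / (n + α)) = A / lam := by
    rw [← Real.rpow_mul hR0, mul_div_cancel₀ _ hα.ne', hR,
      Real.rpow_inv_rpow (by positivity) hd.ne']
  calc ENNReal.ofReal lam * mixedNormW n ((n + α) / d) pt α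
        (fun x => if lam < |g x| then 1 else 0)
      ≤ ENNReal.ofReal lam * mixedNormW n ((n + α) / d) pt α
          (fun x => (Iio R).indicator 1 ‖x‖) := mul_le_mul_right hlevel _
    _ = ENNReal.ofReal (lam * ((n * nu n) ^ (1 / pt) *
          ((R ^ ((n : ℝ) + α) - 0 ^ ((n : ℝ) + α)) / (n + α)) ^ (d / (n + α)))) := by
      rw [mixedNormW_indicator_norm_eq (by positivity) hpt hα measurableSet_Iio le_rfl hR0
        Iio_inter_Ioi, one_div_div, ← ENNReal.ofReal_mul hlam.le]
    _ = _ := by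
      rw [Real.zero_rpow hα.ne', sub_zero, div_eq_mul_one_div (R ^ _),
        Real.mul_rpow (x := R ^ ((n : ℝ) + α)) (Real.rpow_nonneg hR0 _) (by positivity), hR_pow]
      congr 1
      field_simp

end WeakNorm

section FracHardy

open Filter Topology

variable {n : ℕ} {β pt₁ pt₂ α : ℝ}

theorem weakMixedNormW_fracHardy_le (hn : n ≠ 0) (hpt₁ : 1 < pt₁) (hpt₂ : 0 < pt₂)
    (hα : 0 < n + α) (hβ : β < n) {f : EuclideanSpace ℝ (Fin n) → ℝ} (hf : Measurable f)
    (hfin : mixedNormW n 1 pt₁ 0 f < ⊤) :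
    weakMixedNormW n ((n + α) / (n - β)) pt₂ α (fracHardy n β f) ≤
      ENNReal.ofReal ((n * nu n) ^ ((1 - 1 / pt₁) + 1 / pt₂) * nu n ^ (β / n - 1) *
        (1 / (n + α)) ^ ((n - β) / (n + α))) * mixedNormW n 1 pt₁ 0 f := by
  have hν := nu_pos n
  have hweak := weakMixedNormW_le_of_abs_le hpt₂ hα (sub_pos.2 hβ)
    (A := (n * nu n) ^ (1 - 1 / pt₁) * nu n ^ (β / n - 1) * (mixedNormW n 1 pt₁ 0 f).toReal)
    (by positivity) fun x hx => by rw [neg_sub]; exact abs_fracHardy_le hn hpt₁ hf hfin hx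
  refine hweak.trans_eq ?_
  rw [← ENNReal.ofReal_toReal hfin.ne, ← ENNReal.ofReal_mul (by positivity),
    ENNReal.ofReal_toReal hfin.ne, Real.rpow_add (by positivity)]
  ring_nf

lemma fracHardy_indicator_ball_one (hn : n ≠ 0) {x : EuclideanSpace ℝ (Fin n)}
    (hx : 1 ≤ ‖x‖) :
    fracHardy n β ((ball 0 1).indicator 1) x = nu n ^ (β / n) * ‖x‖ ^ (β - n) := by
  have hball : ball (0 : EuclideanSpace ℝ (Fin n)) 1 ⊆ closedBall 0 ‖x‖ :=
    ball_subset_closedBall.trans (closedBall_subset_closedBall hx)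
  rw [fracHardy, volume_ball_toReal_rpow hn (by linarith) β,
    setIntegral_indicator measurableSet_ball, inter_eq_right.2 hball, Pi.one_def,
    setIntegral_const, smul_eq_mul, mul_one, measureReal_def, ← nu,
    mul_right_comm, ← Real.rpow_add_one (nu_pos n).ne', sub_add_cancel]

lemma mixedNormW_indicator_ball_one (hn : n ≠ 0) (hpt : 0 < pt₁) :
    mixedNormW n 1 pt₁ 0 ((ball (0 : EuclideanSpace ℝ (Fin n)) 1).indicator 1) =
      ENNReal.ofReal ((n * nu n) ^ (1 / pt₁) / n) := by
  have hball : (ball (0 : EuclideanSpace ℝ (Fin n)) 1).indicator 1 =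
      fun x => (Iio 1).indicator (1 : ℝ → ℝ) ‖x‖ := by
    ext x
    by_cases hx : ‖x‖ < 1 <;> simp [hx]
  rw [hball, mixedNormW_indicator_norm_eq one_pos hpt (by positivity) measurableSet_Iio le_rfl
    zero_le_one Iio_inter_Ioi]
  simp [hn, div_eq_mul_inv]

lemma rpow_neg_mul_sub_one_div_rpow {b c d : ℝ} (hb : 1 ≤ b) (hc : 0 < c) :
    b ^ (-d) * ((b ^ c - 1) / c) ^ (d / c) = (1 / c) ^ (d / c) * (1 - b ^ (-c)) ^ (d / c) := by
  have hb0 : 0 < b := zero_lt_one.trans_le hb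
  have hbc : 1 ≤ b ^ c := Real.one_le_rpow hb hc.le
  have hprod : b ^ (-c) * ((b ^ c - 1) / c) = 1 / c * (1 - b ^ (-c)) := by
    rw [Real.rpow_neg hb0.le]
    field_simp
  have hsub : 0 ≤ 1 - b ^ (-c) := by
    rw [sub_nonneg, Real.rpow_neg hb0.le]
    exact inv_le_one_of_one_le₀ hbc
  rw [show -d = -c * (d / c) by field_simp, Real.rpow_mul hb0.le,
    ← Real.mul_rpow (by positivity) (div_nonneg (sub_nonneg.2 hbc) hc.le), hprod,
    Real.mul_rpow (by positivity) hsub]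

lemma ofReal_le_weakMixedNormW_fracHardy_indicator_ball_of_one_lt (hn : n ≠ 0)
    (hpt₂ : 0 < pt₂) (hα : 0 < n + α) (hβ : β < n) {b : ℝ} (hb : 1 < b) :
    ENNReal.ofReal (nu n ^ (β / n) * (n * nu n) ^ (1 / pt₂) * (1 / (n + α)) ^ ((n - β) / (n + α)) *
        (1 - b ^ (-(n + α))) ^ ((n - β) / (n + α))) ≤
      weakMixedNormW n ((n + α) / (n - β)) pt₂ α (fracHardy n β ((ball 0 1).indicator 1)) := by
  have hν := nu_pos n
  have hlevel := ofReal_mul_mixedNormW_le_weakMixedNormW (by positivity) hpt₂.le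
    (p := (n + α) / (n - β)) (α := α) (g := fracHardy n β ((ball 0 1).indicator 1))
    (S := Ioo 1 b) (lam := nu n ^ (β / n) * b ^ (β - n)) (by positivity) fun x hx => by
      have hx0 : 0 < ‖x‖ := by linarith [hx.1]
      rw [fracHardy_indicator_ball_one hn hx.1.le, abs_of_pos (by positivity)]
      exact mul_lt_mul_of_pos_left
        (Real.rpow_lt_rpow_of_neg hx0 hx.2 (by linarith)) (by positivity)
  rw [mixedNormW_indicator_norm_eq (by positivity) hpt₂ hα measurableSet_Ioo zero_le_one hb.le
    (by rw [Ioo_inter_Ioi, max_eq_left zero_le_one]), ← ENNReal.ofReal_mul (by positivity),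
    one_div_div, Real.one_rpow] at hlevel
  refine le_trans (le_of_eq ?_) hlevel
  congr 1
  have hpow := rpow_neg_mul_sub_one_div_rpow (d := n - β) hb.le hα
  rw [neg_sub] at hpow
  linear_combination (-(nu n ^ (β / n) * (n * nu n) ^ (1 / pt₂))) * hpow

lemma ofReal_le_weakMixedNormW_fracHardy_indicator_ball (hn : n ≠ 0) (hpt₂ : 0 < pt₂)
    (hα : 0 < n + α) (hβ : β < n) :
    ENNReal.ofReal (nu n ^ (β / n) * (n * nu n) ^ (1 / pt₂) * (1 / (n + α)) ^ ((n - β) / (n + α))) ≤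
      weakMixedNormW n ((n + α) / (n - β)) pt₂ α (fracHardy n β ((ball 0 1).indicator 1)) := by
  have hγ : 0 < (n - β) / (n + α) := div_pos (sub_pos.2 hβ) hα
  have hlim := ((tendsto_rpow_neg_atTop hα).const_sub 1).rpow_const (p := (n - β) / (n + α))
    (Or.inr hγ.le)
  rw [sub_zero, Real.one_rpow] at hlim
  refine le_of_tendsto ?_ ((eventually_gt_atTop 1).mono fun b hb =>
    ofReal_le_weakMixedNormW_fracHardy_indicator_ball_of_one_lt hn hpt₂ hα hβ hb)
  simpa using ENNReal.tendsto_ofReal (tendsto_const_nhds.mul hlim)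

theorem le_of_weakMixedNormW_fracHardy_indicator_ball_le (hn : n ≠ 0) (hpt₁ : 0 < pt₁)
    (hpt₂ : 0 < pt₂) (hα : 0 < n + α) (hβ : β < n) {C : ℝ≥0∞}
    (hC : weakMixedNormW n ((n + α) / (n - β)) pt₂ α (fracHardy n β ((ball 0 1).indicator 1)) ≤
      C * mixedNormW n 1 pt₁ 0 ((ball 0 1).indicator 1)) :
    ENNReal.ofReal ((n * nu n) ^ ((1 - 1 / pt₁) + 1 / pt₂) * nu n ^ (β / n - 1) *
      (1 / (n + α)) ^ ((n - β) / (n + α))) ≤ C := by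
  have hν := nu_pos n
  have hnR : (0 : ℝ) < n := Nat.cast_pos.2 (Nat.pos_of_ne_zero hn)
  have hω : (n * nu n) ^ ((1 - 1 / pt₁) + 1 / pt₂) * (n * nu n) ^ (1 / pt₁) / n =
      (n * nu n) ^ (1 / pt₂) * nu n := by
    rw [← Real.rpow_add (by positivity),
      show 1 - 1 / pt₁ + 1 / pt₂ + 1 / pt₁ = 1 / pt₂ + 1 by ring, Real.rpow_add_one (by positivity)]
    field_simp
  have hν_pow : nu n ^ (β / n - 1) * nu n = nu n ^ (β / n) := by
    rw [← Real.rpow_add_one hν.ne', sub_add_cancel]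
  have hconst : (n * nu n) ^ ((1 - 1 / pt₁) + 1 / pt₂) * nu n ^ (β / n - 1) *
      (1 / (n + α)) ^ ((n - β) / (n + α)) * ((n * nu n) ^ (1 / pt₁) / n) =
      nu n ^ (β / n) * (n * nu n) ^ (1 / pt₂) * (1 / (n + α)) ^ ((n - β) / (n + α)) := by
    linear_combination (nu n ^ (β / n - 1) * (1 / (n + α)) ^ ((n - β) / (n + α))) * hω +
      ((n * nu n) ^ (1 / pt₂) * (1 / (n + α)) ^ ((n - β) / (n + α))) * hν_pow
  have hlower := (ofReal_le_weakMixedNormW_fracHardy_indicator_ball hn hpt₂ hα hβ).trans hC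
  rwa [mixedNormW_indicator_ball_one hn hpt₁, ← hconst, ENNReal.ofReal_mul (by positivity),
    ENNReal.mul_le_mul_iff_left (ENNReal.ofReal_pos.2 (by positivity)).ne'
      ENNReal.ofReal_ne_top] at hlower

end FracHardy

theorem fracHardy_mixed_weak_endpoint_general (n : ℕ) (hn : 2 ≤ n) (β pt₁ pt₂ α₂ : ℝ)
    (hpt₁ : 1 < pt₁) (hpt₂ : 1 < pt₂) (hα₂ : 0 < n + α₂)
    (hβn : β < n) :
    (∀ f : EuclideanSpace ℝ (Fin n) → ℝ, Measurable f → mixedNormW n 1 pt₁ 0 f < ⊤ →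
      weakMixedNormW n ((n + α₂) / (n - β)) pt₂ α₂ (fracHardy n β f)
        ≤ ENNReal.ofReal ((n * nu n) ^ ((1 - 1 / pt₁) + 1 / pt₂) * nu n ^ (β / n - 1) *
            (1 / (n + α₂)) ^ ((n - β) / (n + α₂))) * mixedNormW n 1 pt₁ 0 f) ∧
    (∀ C : ℝ≥0∞,
      (∀ f : EuclideanSpace ℝ (Fin n) → ℝ, Measurable f → mixedNormW n 1 pt₁ 0 f < ⊤ →
        weakMixedNormW n ((n + α₂) / (n - β)) pt₂ α₂ (fracHardy n β f)
          ≤ C * mixedNormW n 1 pt₁ 0 f) →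
      ENNReal.ofReal ((n * nu n) ^ ((1 - 1 / pt₁) + 1 / pt₂) * nu n ^ (β / n - 1) *
          (1 / (n + α₂)) ^ ((n - β) / (n + α₂))) ≤ C) := by
  have hn₀ : n ≠ 0 := by omega
  constructor
  · intro f hf hfin
    exact weakMixedNormW_fracHardy_le hn₀ hpt₁ (by linarith) hα₂ hβn hf hfin
  · intro C hC
    have hball : mixedNormW n 1 pt₁ 0 ((ball 0 1).indicator 1) < ⊤ := by
      rw [mixedNormW_indicator_ball_one hn₀ (by linarith)]
      exact ENNReal.ofReal_lt_top
    exact le_of_weakMixedNormW_fracHardy_indicator_ball_le hn₀ (by linarith) (by linarith) hα₂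
      hβn (hC _ (measurable_one.indicator measurableSet_ball) hball)

/-- Endpoint case: the fractional Hardy operator maps `L¹_{rad}L^{p̃₁}_{ang}(ℝⁿ)` to
`𝓦L^{(n+α₂)/(n−β)}_{rad}L^{p̃₂}_{ang}(ℝⁿ, |x|^{α₂})` with operator norm exactly
`ω_n^{1/p̃₁' + 1/p̃₂} ν_n^{β/n − 1} (1/(n+α₂))^{(n−β)/(n+α₂)}`. -/
theorem fracHardy_mixed_weak_endpoint (n : ℕ) (hn : 2 ≤ n) (β pt₁ pt₂ α₂ : ℝ)
    (hpt₁ : 1 < pt₁) (hpt₂ : 1 < pt₂) (hα₂ : 0 < n + α₂)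
    (hβ₀ : 0 < β) (hβn : β < n) :
    (∀ f : EuclideanSpace ℝ (Fin n) → ℝ, Measurable f → mixedNormW n 1 pt₁ 0 f < ⊤ →
      weakMixedNormW n ((n + α₂) / (n - β)) pt₂ α₂ (fracHardy n β f)
        ≤ ENNReal.ofReal ((n * nu n) ^ ((1 - 1 / pt₁) + 1 / pt₂) * nu n ^ (β / n - 1) *
            (1 / (n + α₂)) ^ ((n - β) / (n + α₂))) * mixedNormW n 1 pt₁ 0 f) ∧
    (∀ C : ℝ≥0∞,
      (∀ f : EuclideanSpace ℝ (Fin n) → ℝ, Measurable f → mixedNormW n 1 pt₁ 0 f < ⊤ →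
        weakMixedNormW n ((n + α₂) / (n - β)) pt₂ α₂ (fracHardy n β f)
          ≤ C * mixedNormW n 1 pt₁ 0 f) →
      ENNReal.ofReal ((n * nu n) ^ ((1 - 1 / pt₁) + 1 / pt₂) * nu n ^ (β / n - 1) *
          (1 / (n + α₂)) ^ ((n - β) / (n + α₂))) ≤ C) :=
  fracHardy_mixed_weak_endpoint_general n hn β pt₁ pt₂ α₂ hpt₁ hpt₂ hα₂ hβn
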